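/- Monotonicity of abstention in agreement: with K ~ Binomial(n, p) and fixed threshold t > n/2, the abstention probability P(n − t < K < t) is nonincreasing in p for p ∈ [1/2, 1]. -/

import Mathlib

/-!
The abstention probability is the sum of the Bernstein polynomials `b_{n,k}` over the window
`n - t < k < t`. As `b_{n,k}' = n (b_{n-1,k-1} - b_{n-1,k})`, its derivative telescopes to
`n (b_{n-1,n-t} - b_{n-1,t-1})`. The two boundary terms have the same binomial coefficient, and
`x^(n-t) (1-x)^(t-1) ≤ x^(t-1) (1-x)^(n-t)` for `x ≥ 1/2` because `n - t ≤ t - 1`.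
-/

open Finset Polynomial

lemma pow_mul_pow_le_pow_mul_pow {R : Type*} [CommSemiring R] [PartialOrder R]
    [IsOrderedRing R] {y z : R} (hy : 0 ≤ y) (hyz : y ≤ z) {a b : ℕ} (hab : a ≤ b) :
    z ^ a * y ^ b ≤ z ^ b * y ^ a := by
  obtain ⟨d, rfl⟩ := Nat.exists_eq_add_of_le hab
  calc z ^ a * y ^ (a + d) = (z * y) ^ a * y ^ d := by ring
    _ ≤ (z * y) ^ a * z ^ d := mul_le_mul_of_nonneg_left (pow_le_pow_left₀ hy hyz d)
      (pow_nonneg (mul_nonneg (hy.trans hyz) hy) a)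
    _ = z ^ (a + d) * y ^ a := by ring

namespace bernsteinPolynomial

theorem derivative_sum_Ioc {R : Type*} [CommRing R] (n : ℕ) {a b : ℕ} (hab : a ≤ b) :
    derivative (∑ k ∈ Ioc a b, bernsteinPolynomial R n k) =
      n * (bernsteinPolynomial R (n - 1) a - bernsteinPolynomial R (n - 1) b) := by
  induction b, hab using Nat.le_induction with
  | base => simp
  | succ b hab ih =>
    rw [sum_Ioc_succ_top hab, derivative_add, ih, derivative_succ]
    ring

theorem eval_le_eval_of_half_le {m a b : ℕ} (hab : a ≤ b) (hm : a + b = m) {x : ℝ}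
    (hx : 1 / 2 ≤ x) (hx1 : x ≤ 1) :
    (bernsteinPolynomial ℝ m a).eval x ≤ (bernsteinPolynomial ℝ m b).eval x := by
  have hma : m - a = b := by omega
  have hmb : m - b = a := by omega
  simp only [bernsteinPolynomial, eval_mul, eval_pow, eval_sub, eval_one, eval_X, eval_natCast,
    hma, hmb, Nat.choose_symm_of_eq_add hm.symm, mul_assoc]
  exact mul_le_mul_of_nonneg_left
    (pow_mul_pow_le_pow_mul_pow (by linarith) (by linarith) hab) (Nat.cast_nonneg _)

theorem antitoneOn_eval_sum_Ioc {n a b : ℕ} (hab : a ≤ b) (hn : a + b + 1 = n) :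
    AntitoneOn (fun x => (∑ k ∈ Ioc a b, bernsteinPolynomial ℝ n k).eval x)
      (Set.Icc (1 / 2) 1) := by
  apply antitoneOn_of_deriv_nonpos (convex_Icc _ _) (Polynomial.continuousOn _)
    (Polynomial.differentiableOn _)
  intro x hx
  rw [interior_Icc] at hx
  rw [Polynomial.deriv, derivative_sum_Ioc n hab]
  simp only [eval_mul, eval_natCast, eval_sub]
  have hboundary := eval_le_eval_of_half_le hab (by omega : a + b = n - 1) hx.1.le hx.2.le
  exact mul_nonpos_of_nonneg_of_nonpos (Nat.cast_nonneg n) (by linarith)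

end bernsteinPolynomial

theorem stmt_11_general (n t : ℕ) (ht : n < 2 * t) (htn : t ≤ n)
    (p q : ℝ) (hp : 1/2 ≤ p) (hpq : p ≤ q) (hq : q ≤ 1) :
    ∑ k ∈ Ioo (n - t) t, (n.choose k : ℝ) * q^k * (1-q)^(n-k) ≤
      ∑ k ∈ Ioo (n - t) t, (n.choose k : ℝ) * p^k * (1-p)^(n-k) := by
  have hwindow : Ioo (n - t) t = Ioc (n - t) (t - 1) := by
    ext k; simp only [mem_Ioo, mem_Ioc]; omega
  have hanti := bernsteinPolynomial.antitoneOn_eval_sum_Ioc (n := n) (a := n - t) (b := t - 1)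
    (by omega) (by omega)
  have hle := hanti ⟨hp, hpq.trans hq⟩ ⟨hp.trans hpq, hq⟩ hpq
  simpa only [hwindow, eval_finsetSum, bernsteinPolynomial, eval_mul, eval_pow, eval_sub,
    eval_one, eval_X, eval_natCast] using hle

theorem stmt_11 (n t : ℕ) (hn : 0 < n) (ht : n < 2 * t) (htn : t ≤ n)
    (p q : ℝ) (hp : 1/2 ≤ p) (hpq : p ≤ q) (hq : q ≤ 1) :
    ∑ k ∈ Ioo (n - t) t, (n.choose k : ℝ) * q^k * (1-q)^(n-k) ≤
      ∑ k ∈ Ioo (n - t) t, (n.choose k : ℝ) * p^k * (1-p)^(n-k) :=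
  stmt_11_general n t ht htn p q hp hpq hq
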